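/- arXiv:1804.05189 — 5 statements merged into one kernel-verified Lean document; each statement's English description precedes it below -/
import Mathlib

section
/- Let Y be an N-doubling metric space, L ≥ 1, and M a natural number. Then there exists a constant K = C^(M-1) (where C = C(N,L) is the covering constant such that any set of diameter D in Y can be covered by at most C subsets of diameter at most D/(2L)) such that every subset T of Y with at least K elements contains an M-tuple (x_1,...,x_M) satisfying d(x_i, x_{i+1}) ≥ L · d(x_i, x_k) for all 1 ≤ k ≤ i ≤ M-1. -/
open Metric Set

/-- A finite set is `r`-separated: distinct points have distance at least `r`. -/
def IsSepFinset {Y : Type*} [MetricSpace Y] (r : ℝ) (S : Finset Y) : Prop :=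
  ∀ a ∈ S, ∀ b ∈ S, a ≠ b → r ≤ dist a b

/-- A metric space is `N`-doubling: no ball of radius `r` contains an
`(r/2)`-separated subset with more than `N` elements. -/
def NDoubling (Y : Type*) [MetricSpace Y] (N : ℕ) : Prop :=
  ∀ (x : Y) (r : ℝ) (S : Finset Y),
    (↑S : Set Y) ⊆ closedBall x r → IsSepFinset (r / 2) S → S.card ≤ N

lemma doubling_iter {Y : Type*} [MetricSpace Y] {N : ℕ} (hY : NDoubling Y N)
    (hN : 1 ≤ N) :
    ∀ k, 1 ≤ k → ∀ (x : Y) (r : ℝ) (S : Finset Y), (↑S : Set Y) ⊆ closedBall x r →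
      IsSepFinset (r / 2 ^ k) S → S.card ≤ N ^ k := by
  intro k hk
  induction k, hk using Nat.le_induction with
  | base =>
    intro x r S hsub hsep
    simpa using hY x r S hsub (by simpa using hsep)
  | succ k hk IH =>
    intro x r S hsub hsep
    classical
    rcases le_or_gt r 0 with hr | hr
    · -- ball is a subsingleton
      have hsub' : (↑S : Set Y) ⊆ {x} := by
        refine hsub.trans ?_
        intro y hy
        have : dist y x ≤ 0 := le_trans (mem_closedBall.mp hy) hr
        have : dist y x = 0 := le_antisymm this dist_nonneg
        simp [dist_eq_zero.mp this]
      have h1 : S.card ≤ 1 := by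
        apply Finset.card_le_one.mpr
        intro a ha b hb
        have ha' : a ∈ ({x} : Set Y) := hsub' (by exact_mod_cast ha)
        have hb' : b ∈ ({x} : Set Y) := hsub' (by exact_mod_cast hb)
        simp at ha' hb'; rw [ha', hb']
      calc S.card ≤ 1 := h1
        _ ≤ N ^ (k + 1) := Nat.one_le_pow _ _ hN
    · -- pick a maximal (r/2)-separated subset F of S
      obtain ⟨F, hFmem, hFmax⟩ :=
        Finset.exists_max_image (S.powerset.filter fun F => IsSepFinset (r / 2) F)
          Finset.card (⟨∅, Finset.mem_filter.mpr ⟨Finset.empty_mem_powerset _, by simp [IsSepFinset]⟩⟩)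
      rw [Finset.mem_filter, Finset.mem_powerset] at hFmem
      obtain ⟨hFS, hFsep⟩ := hFmem
      -- maximality: every point of S is close to some point of F
      have hclose : ∀ s ∈ S, ∃ t ∈ F, dist s t < r / 2 := by
        intro s hs
        by_contra hcon
        push_neg at hcon
        have hsF : s ∉ F := by
          intro hsF
          have := hcon s hsF
          simp at this
          linarith
        have hins : IsSepFinset (r / 2) (insert s F) := by
          intro a ha b hb hab
          rcases Finset.mem_insert.mp ha with ha' | ha'
          · rcases Finset.mem_insert.mp hb with hb' | hb'
            · exact absurd (ha'.trans hb'.symm) hab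
            · rw [ha']; exact hcon b hb'
          · rcases Finset.mem_insert.mp hb with hb' | hb'
            · rw [hb', dist_comm]; exact hcon a ha'
            · exact hFsep a ha' b hb' hab
        have hmem : insert s F ∈ S.powerset.filter fun F => IsSepFinset (r / 2) F := by
          rw [Finset.mem_filter, Finset.mem_powerset]
          exact ⟨Finset.insert_subset hs hFS, hins⟩
        have := hFmax _ hmem
        rw [Finset.card_insert_of_notMem hsF] at this
        omega
      -- F has at most N elements
      have hFcard : F.card ≤ N := by
        apply hY x r F _ hFsep
        exact (Finset.coe_subset.mpr hFS).trans hsub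
      -- S is covered by the balls around F
      have hScover : S ⊆ F.biUnion fun t => S.filter fun s => dist s t < r / 2 := by
        intro s hs
        obtain ⟨t, ht, hst⟩ := hclose s hs
        exact Finset.mem_biUnion.mpr ⟨t, ht, Finset.mem_filter.mpr ⟨hs, hst⟩⟩
      have hdiv : r / 2 ^ (k + 1) = r / 2 / 2 ^ k := by
        rw [div_div, ← pow_succ']
      calc S.card ≤ (F.biUnion fun t => S.filter fun s => dist s t < r / 2).card :=
            Finset.card_le_card hScover
        _ ≤ ∑ t ∈ F, (S.filter fun s => dist s t < r / 2).card := Finset.card_biUnion_le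
        _ ≤ ∑ _t ∈ F, N ^ k := by
            apply Finset.sum_le_sum
            intro t ht
            apply IH t (r / 2)
            · intro s hs
              rw [Finset.mem_coe, Finset.mem_filter] at hs
              exact mem_closedBall.mpr (le_of_lt hs.2)
            · intro a ha b hb hab
              rw [Finset.mem_filter] at ha hb
              rw [← hdiv]
              exact hsep a ha.1 b hb.1 hab
        _ = F.card * N ^ k := by rw [Finset.sum_const, smul_eq_mul]
        _ ≤ N * N ^ k := Nat.mul_le_mul_right _ hFcard
        _ = N ^ (k + 1) := (pow_succ' N k).symm

lemma chain_lemma {Y : Type*} [MetricSpace Y] {L : ℝ} (hL : 1 ≤ L) {C : ℕ} (hC : 1 ≤ C)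
    (hC2 : 2 ≤ C)
    (hcov : ∀ (S : Set Y) (D : ℝ), Bornology.IsBounded S → Metric.diam S ≤ D →
      ∃ 𝒰 : Finset (Set Y), 𝒰.card ≤ C ∧ S ⊆ ⋃₀ ↑𝒰 ∧
        ∀ u ∈ 𝒰, Bornology.IsBounded u ∧ Metric.diam u ≤ D / (2 * L)) :
    ∀ M, 1 ≤ M → ∀ T : Finset Y, C ^ (M - 1) ≤ T.card →
      ∃ x : Fin M → Y, (∀ i, x i ∈ T) ∧
        ∀ (i : Fin M) (hi : (i : ℕ) + 1 < M), x i ≠ x ⟨(i : ℕ) + 1, hi⟩ ∧ ∀ k : Fin M, k ≤ i →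
          L * dist (x i) (x k) ≤ dist (x i) (x ⟨(i : ℕ) + 1, hi⟩) := by
  intro M hM
  induction M, hM using Nat.le_induction with
  | base =>
    intro T hT
    have hT' : 0 < T.card := lt_of_lt_of_le (by norm_num) hT
    obtain ⟨t, ht⟩ := Finset.card_pos.mp hT'
    exact ⟨fun _ => t, fun _ => ht, fun i hi => absurd hi (by omega)⟩
  | succ M hM IH =>
    intro T hT
    classical
    simp only [Nat.add_sub_cancel] at hT
    have hTpos : 0 < T.card := lt_of_lt_of_le (pow_pos hC M) hT
    have hTne : T.Nonempty := Finset.card_pos.mp hTpos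
    set D := Metric.diam (↑T : Set Y) with hD
    obtain ⟨𝒰, h𝒰card, hcover, hpieces⟩ :=
      hcov (↑T) D (T.finite_toSet.isBounded) le_rfl
    -- pigeonhole: some piece contains many points of T
    have hpig : ∃ u ∈ 𝒰, C ^ (M - 1) ≤ (T.filter fun t => t ∈ u).card := by
      by_contra hcon
      push_neg at hcon
      have hsub : T ⊆ 𝒰.biUnion fun u => T.filter fun t => t ∈ u := by
        intro t ht
        obtain ⟨u, hu, htu⟩ := hcover (by exact_mod_cast ht)
        exact Finset.mem_biUnion.mpr ⟨u, by exact_mod_cast hu, Finset.mem_filter.mpr ⟨ht, htu⟩⟩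
      set A := C ^ (M - 1) with hA
      have hApos : 0 < A := pow_pos hC _
      have h1 : T.card ≤ ∑ u ∈ 𝒰, (T.filter fun t => t ∈ u).card :=
        le_trans (Finset.card_le_card hsub) Finset.card_biUnion_le
      have h2 : ∑ u ∈ 𝒰, (T.filter fun t => t ∈ u).card ≤ 𝒰.card * (A - 1) := by
        rw [← smul_eq_mul]
        apply Finset.sum_le_card_nsmul
        intro u hu
        have := hcon u hu
        omega
      have h3 : 𝒰.card * (A - 1) ≤ C * (A - 1) := Nat.mul_le_mul_right _ h𝒰card
      have h4 : C * A ≤ T.card := by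
        calc C * A = C ^ M := by rw [hA, ← pow_succ']; congr 1; omega
          _ ≤ T.card := hT
      have h5 : C * (A - 1) < C * A := (Nat.mul_lt_mul_left hC).mpr (by omega)
      omega
    obtain ⟨u, hu, hucard⟩ := hpig
    obtain ⟨hubdd, hudiam⟩ := hpieces u hu
    set T' := T.filter fun t => t ∈ u with hT'
    obtain ⟨x, hxT', hxchain⟩ := IH T' hucard
    have hxT : ∀ i, x i ∈ T := fun i => (Finset.mem_filter.mp (hxT' i)).1
    have hxu : ∀ i, x i ∈ u := fun i => (Finset.mem_filter.mp (hxT' i)).2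
    -- pick a point of T far from the last chain point
    set last : Y := x ⟨M - 1, by omega⟩ with hlast
    obtain ⟨z, hz, hzmax⟩ := Finset.exists_max_image T (fun t => dist last t) hTne
    have hzD : D ≤ 2 * dist last z := by
      rw [hD]
      apply Metric.diam_le_of_forall_dist_le (by positivity)
      intro a ha b hb
      calc dist a b ≤ dist a last + dist last b := dist_triangle _ _ _
        _ = dist last a + dist last b := by rw [dist_comm]
        _ ≤ dist last z + dist last z := by
            have := hzmax a (by exact_mod_cast ha)
            have := hzmax b (by exact_mod_cast hb)
            linarith
        _ = 2 * dist last z := by ring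
    have hLpos : 0 < L := lt_of_lt_of_le one_pos hL
    -- the extended chain
    refine ⟨fun i => if h : (i : ℕ) < M then x ⟨i, h⟩ else z, ?_, ?_⟩
    · intro i
      by_cases h : (i : ℕ) < M
      · simp only [dif_pos h]; exact hxT _
      · simp only [dif_neg h]; exact hz
    · intro i hi
      have hiM : (i : ℕ) < M := by omega
      refine ⟨?_, fun k hk => ?_⟩
      · simp only [dif_pos hiM]
        by_cases hi1 : (i : ℕ) + 1 < M
        · simp only [dif_pos hi1]
          exact (hxchain ⟨i, hiM⟩ hi1).1
        · simp only [dif_neg hi1]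
          have hiM1 : (i : ℕ) = M - 1 := by omega
          have hxi : x ⟨(i : ℕ), hiM⟩ = last := by
            rw [hlast]; congr 1; exact Fin.ext hiM1
          rw [hxi]
          intro heq
          have hT2 : 2 ≤ T.card :=
            le_trans (le_trans (Nat.le_self_pow (by omega) 2) (Nat.pow_le_pow_left hC2 M)) hT
          obtain ⟨a, ha, b, hb, hab⟩ := Finset.one_lt_card.mp (by omega : 1 < T.card)
          have hDpos : 0 < D := lt_of_lt_of_le (dist_pos.mpr hab)
            (Metric.dist_le_diam_of_mem T.finite_toSet.isBounded
              (by exact_mod_cast ha) (by exact_mod_cast hb))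
          rw [← heq, dist_self] at hzD
          linarith
      have hkM : (k : ℕ) < M := lt_of_le_of_lt hk hiM
      simp only [dif_pos hiM, dif_pos hkM]
      by_cases hi1 : (i : ℕ) + 1 < M
      · simp only [dif_pos hi1]
        exact (hxchain ⟨i, hiM⟩ hi1).2 ⟨k, hkM⟩ hk
      · have hi1' : ¬ ((i : ℕ) + 1 < M) := hi1
        simp only [dif_neg hi1']
        have hiM1 : (i : ℕ) = M - 1 := by omega
        have hxi : x ⟨(i : ℕ), hiM⟩ = last := by
          rw [hlast]; congr 1; exact Fin.ext hiM1
        rw [hxi]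
        have h1 : dist last (x ⟨(k : ℕ), hkM⟩) ≤ D / (2 * L) := by
          refine le_trans ?_ hudiam
          rw [hlast]
          exact Metric.dist_le_diam_of_mem hubdd (hxu _) (hxu _)
        have h2 : L * (D / (2 * L)) = D / 2 := by
          field_simp
        calc L * dist last (x ⟨(k : ℕ), hkM⟩) ≤ L * (D / (2 * L)) := by
              apply mul_le_mul_of_nonneg_left h1 (le_of_lt hLpos)
          _ = D / 2 := h2
          _ ≤ dist last z := by linarith

theorem stmt0 {Y : Type*} [MetricSpace Y] (N : ℕ) (hY : NDoubling Y N)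
    (L : ℝ) (hL : 1 ≤ L) (M : ℕ) (hM : 1 ≤ M) :
    ∃ C : ℕ, 2 ≤ C ∧
      (∀ (S : Set Y) (D : ℝ), Bornology.IsBounded S → Metric.diam S ≤ D →
        ∃ 𝒰 : Finset (Set Y), 𝒰.card ≤ C ∧ S ⊆ ⋃₀ ↑𝒰 ∧
          ∀ u ∈ 𝒰, Bornology.IsBounded u ∧ Metric.diam u ≤ D / (2 * L)) ∧
      ∀ T : Finset Y, C ^ (M - 1) ≤ T.card →
        ∃ x : Fin M → Y, (∀ i, x i ∈ T) ∧
          ∀ (i : Fin M) (hi : (i : ℕ) + 1 < M), x i ≠ x ⟨(i : ℕ) + 1, hi⟩ ∧ ∀ k : Fin M, k ≤ i →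
            L * dist (x i) (x k) ≤ dist (x i) (x ⟨(i : ℕ) + 1, hi⟩) := by
  classical
  rcases isEmpty_or_nonempty Y with hY0 | hY0
  · refine ⟨2, le_rfl, ?_, ?_⟩
    · intro S D hSb hSd
      refine ⟨∅, by simp, ?_, by simp⟩
      have : S = ∅ := Set.eq_empty_of_isEmpty S
      simp [this]
    · intro T hT
      have : T = ∅ := Finset.eq_empty_of_isEmpty T
      simp [this] at hT
  · -- Y nonempty, so N ≥ 1
    obtain ⟨y⟩ := hY0
    have hN : 1 ≤ N := by
      have := hY y 0 {y} (by simp) (by intro a ha b hb hab; simp at ha hb; subst ha; subst hb; exact absurd rfl hab)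
      simpa using this
    -- choose k with 4 * L < 2 ^ k
    obtain ⟨k, hk⟩ := pow_unbounded_of_one_lt (4 * L) one_lt_two
    have hk1 : 1 ≤ k := by
      by_contra h
      push_neg at h
      interval_cases k
      simp at hk
      linarith
    have hLpos : 0 < L := lt_of_lt_of_le one_pos hL
    -- strengthened covering property with constant N ^ k
    have hcov' : ∀ (S : Set Y) (D : ℝ), Bornology.IsBounded S → Metric.diam S ≤ D →
        ∃ 𝒰 : Finset (Set Y), 𝒰.card ≤ N ^ k ∧ S ⊆ ⋃₀ ↑𝒰 ∧
          ∀ u ∈ 𝒰, Bornology.IsBounded u ∧ Metric.diam u ≤ D / (2 * L) := by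
      intro S D hSb hSd
      rcases S.eq_empty_or_nonempty with rfl | ⟨x0, hx0⟩
      · exact ⟨∅, by simp, by simp, by simp⟩
      have hD0 : 0 ≤ D := le_trans Metric.diam_nonneg hSd
      rcases eq_or_lt_of_le hD0 with hD0' | hDpos
      · -- D = 0
        refine ⟨{S}, by simp [Nat.one_le_pow _ _ hN], by simp, ?_⟩
        intro u hu
        simp only [Finset.mem_singleton] at hu
        subst hu
        refine ⟨hSb, ?_⟩
        rw [← hD0']
        simp only [zero_div]
        rw [← hD0'] at hSd
        exact hSd
      · -- D > 0
        set ε := D / 2 ^ k with hε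
        have h2k : (0 : ℝ) < 2 ^ k := by positivity
        have hεpos : 0 < ε := by positivity
        have hball : S ⊆ closedBall x0 D := fun s hs =>
          mem_closedBall.mpr (le_trans (Metric.dist_le_diam_of_mem hSb hs hx0) hSd)
        have hbound : ∀ F : Finset Y, (↑F : Set Y) ⊆ S → IsSepFinset ε F →
            F.card ≤ N ^ k := by
          intro F hFS hFsep
          exact doubling_iter hY hN k hk1 x0 D F (fun a ha => hball (hFS ha)) hFsep
        set P : ℕ → Prop := fun n =>
          ∃ F : Finset Y, (↑F : Set Y) ⊆ S ∧ IsSepFinset ε F ∧ F.card = n with hP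
        have hP0 : P 0 := ⟨∅, by simp, by intro a ha; simp at ha, by simp⟩
        have hPm : P (Nat.findGreatest P (N ^ k)) :=
          Nat.findGreatest_spec (Nat.zero_le _) hP0
        obtain ⟨F, hFS, hFsep, hFcard⟩ := hPm
        have hclose : ∀ s ∈ S, ∃ t ∈ F, dist s t < ε := by
          intro s hs
          by_contra hcon
          push_neg at hcon
          have hsF : s ∉ F := by
            intro h
            have := hcon s h
            simp at this
            linarith
          have hinsS : (↑(insert s F) : Set Y) ⊆ S := by
            rw [Finset.coe_insert]
            exact Set.insert_subset hs hFS
          have hinssep : IsSepFinset ε (insert s F) := by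
            intro a ha b hb hab
            rcases Finset.mem_insert.mp ha with ha' | ha'
            · rcases Finset.mem_insert.mp hb with hb' | hb'
              · exact absurd (ha'.trans hb'.symm) hab
              · rw [ha']; exact hcon b hb'
            · rcases Finset.mem_insert.mp hb with hb' | hb'
              · rw [hb', dist_comm]; exact hcon a ha'
              · exact hFsep a ha' b hb' hab
          have hP1 : P (F.card + 1) :=
            ⟨insert s F, hinsS, hinssep, Finset.card_insert_of_notMem hsF⟩
          have hle : F.card + 1 ≤ N ^ k := by
            have := hbound (insert s F) hinsS hinssep
            rwa [Finset.card_insert_of_notMem hsF] at this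
          exact Nat.findGreatest_is_greatest (by omega) hle hP1
        refine ⟨F.image fun t => closedBall t ε, ?_, ?_, ?_⟩
        · exact le_trans Finset.card_image_le (by rw [hFcard]; exact Nat.findGreatest_le _)
        · intro s hs
          obtain ⟨t, ht, hst⟩ := hclose s hs
          exact ⟨closedBall t ε,
            by exact_mod_cast Finset.mem_image_of_mem (fun t => closedBall t ε) ht,
            mem_closedBall.mpr hst.le⟩
        · intro u hu
          obtain ⟨t, _, rfl⟩ := Finset.mem_image.mp hu
          refine ⟨isBounded_closedBall, ?_⟩
          refine le_trans (diam_closedBall hεpos.le) ?_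
          rw [hε, mul_div_assoc']
          rw [div_le_div_iff₀ h2k (by positivity)]
          nlinarith [mul_lt_mul_of_pos_left hk hDpos]
    refine ⟨max 2 (N ^ k), le_max_left _ _, ?_, ?_⟩
    · intro S D hSb hSd
      obtain ⟨𝒰, h1, h2, h3⟩ := hcov' S D hSb hSd
      exact ⟨𝒰, h1.trans (le_max_right _ _), h2, h3⟩
    · exact chain_lemma hL (le_trans one_le_two (le_max_left _ _)) (le_max_left _ _)
        (fun S D hSb hSd => by
          obtain ⟨𝒰, h1, h2, h3⟩ := hcov' S D hSb hSd
          exact ⟨𝒰, h1.trans (le_max_right _ _), h2, h3⟩) M hM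
end

section
/- Let Σ be a compact geodesically complete CAT(1) space of diameter π, and let v, v̄ ∈ Σ. Then v and v̄ are opposite δ-spherical points (i.e., d(v,w) + d(w,v̄) < π + δ for all w ∈ Σ) if and only if d(v̄, w) < δ for every antipode w of v (i.e., every w with d(v,w) = π). In particular, in this case d(v, v̄) > π − δ and the set of all antipodes of v has diameter less than 2δ. -/
open Metric Set

/-- `Σ` is a compact geodesically complete CAT(1) space of diameter `π`; geodesic
completeness is encoded by `hext`: every geodesic `vw` extends to a geodesic of
length `π` from `v`, ending at an antipode `a` of `v` with `d(w,a) = π - d(v,w)`.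
Opposite `δ`-spherical points `v, v̄` satisfy `d(v,w) + d(w,v̄) < π + δ` for all `w`. -/
theorem stmt1 {S : Type*} [MetricSpace S] [CompactSpace S] [Nonempty S]
    (hdiam : Metric.diam (Set.univ : Set S) = Real.pi)
    (hext : ∀ v w : S, ∃ a : S, dist v a = Real.pi ∧ dist w a = Real.pi - dist v w)
    (δ : ℝ) (hδ : 0 < δ) (v vb : S) :
    ((∀ w : S, dist v w + dist w vb < Real.pi + δ) ↔
      ∀ w : S, dist v w = Real.pi → dist vb w < δ) ∧
    ((∀ w : S, dist v w + dist w vb < Real.pi + δ) →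
      Real.pi - δ < dist v vb ∧
        Metric.diam {w : S | dist v w = Real.pi} < 2 * δ) := by
  have hiff : (∀ w : S, dist v w + dist w vb < Real.pi + δ) ↔
      ∀ w : S, dist v w = Real.pi → dist vb w < δ := by
    constructor
    · intro h w hw
      have := h w
      rw [hw] at this
      rw [dist_comm]
      linarith
    · intro h w
      obtain ⟨a, ha, hwa⟩ := hext v w
      have hva := h a ha
      have h1 : dist w vb ≤ dist w a + dist a vb := dist_triangle w a vb
      have h2 : dist v w ≤ Real.pi := by
        calc dist v w ≤ Metric.diam (Set.univ : Set S) :=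
          dist_le_diam_of_mem (isCompact_univ.isBounded) (mem_univ v) (mem_univ w)
        _ = Real.pi := hdiam
      rw [dist_comm a vb] at h1
      linarith [hwa ▸ h1]
  refine ⟨hiff, fun h => ?_⟩
  have h' := hiff.mp h
  constructor
  · obtain ⟨a, ha, hva⟩ := hext v vb
    have := h' a ha
    linarith
  · set K := {w : S | dist v w = Real.pi} with hK
    rcases K.eq_empty_or_nonempty with hKe | hKne
    · rw [hKe, Metric.diam_empty]; linarith
    · have hKc : IsClosed K := isClosed_eq (continuous_const.dist continuous_id) continuous_const
      have hKcomp : IsCompact (K ×ˢ K) := (hKc.isCompact).prod (hKc.isCompact)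
      obtain ⟨⟨x, y⟩, hxy, hmax⟩ := hKcomp.exists_isMaxOn (hKne.prod hKne)
        (continuous_dist.comp (continuous_fst.prodMk continuous_snd)).continuousOn
      have hdK : Metric.diam K ≤ dist x y := by
        apply Metric.diam_le_of_forall_dist_le dist_nonneg
        intro a ha b hb
        exact hmax (Set.mk_mem_prod ha hb)
      have hx := h' x hxy.1
      have hy := h' y hxy.2
      have : dist x y ≤ dist vb x + dist vb y := by
        rw [dist_comm vb x]; exact dist_triangle x vb y
      linarith
end

section
/- Let V be an open subset of a tiny ball U in a GCBA space, let ρ = 1/(4k), and let f_1,...,f_k be distance functions to points p_1,...,p_k. Assume that for every x ∈ V and each 1 ≤ i ≤ k there are unit directions v_i^± in the space of directions Σ_x with ±D_x f_i(v_i^±) > 1 − ρ and |D_x f_j(v_i^±)| < 2ρ for j ≠ i. Then the map F = (f_1,...,f_k): V → ℝ^k, with ℝ^k equipped with the L¹-norm, is 2-open: for every x ∈ V and r > 0 such that the closed ball B̄_{2r}(x) is complete and contained in V, one has B_r(F(x)) ⊆ F(B_{2r}(x)). -/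
open Metric Set

open Filter Topology

theorem myEkeland {X : Type*} [MetricSpace X] {s : Set X} (hs : IsComplete s)
    {g : X → ℝ} (hg : Continuous g) (hg0 : ∀ z ∈ s, 0 ≤ g z) {x : X} (hx : x ∈ s) :
    ∃ y ∈ s, g y + (1/2) * dist x y ≤ g x ∧
      ∀ z ∈ s, g z + (1/2) * dist y z ≤ g y → z = y := by
  classical
  set D : X → Set X := fun z => {w | w ∈ s ∧ g w + (1/2) * dist z w ≤ g z} with hD
  have hDself : ∀ z ∈ s, z ∈ D z := fun z hz => ⟨hz, by simp⟩
  have hDsub : ∀ z, D z ⊆ s := fun z w hw => hw.1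
  have htrans : ∀ z w u, w ∈ D z → u ∈ D w → u ∈ D z := by
    rintro z w u ⟨hws, hw⟩ ⟨hus, hu⟩
    refine ⟨hus, ?_⟩
    have := dist_triangle z w u
    linarith
  have hbdd : ∀ z, BddBelow (g '' D z) := by
    intro z
    exact ⟨0, by rintro a ⟨w, hw, rfl⟩; exact hg0 w (hDsub z hw)⟩
  have hchoice : ∀ z : X, ∀ n : ℕ, ∃ w : X,
      z ∈ s → (w ∈ D z ∧ g w < sInf (g '' D z) + (1/2)^n) := by
    intro z n
    by_cases hz : z ∈ s
    · have hne : (g '' D z).Nonempty := ⟨g z, z, hDself z hz, rfl⟩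
      obtain ⟨a, ⟨w, hw, rfl⟩, ha⟩ := Real.lt_sInf_add_pos hne (by positivity : (0:ℝ) < (1/2)^n)
      exact ⟨w, fun _ => ⟨hw, ha⟩⟩
    · exact ⟨z, fun h => absurd h hz⟩
  choose next hnext using hchoice
  set y : ℕ → X := fun n => Nat.rec x (fun n w => next w n) n with hy
  have hy0 : y 0 = x := rfl
  have hysucc : ∀ n, y (n+1) = next (y n) n := fun n => rfl
  have hmem : ∀ n, y n ∈ s := by
    intro n; induction n with
    | zero => exact hx
    | succ n ih =>
      have h := (hnext (y n) n ih).1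
      rw [hysucc]
      exact hDsub _ h
  have hstep : ∀ n, y (n+1) ∈ D (y n) ∧ g (y (n+1)) < sInf (g '' D (y n)) + (1/2)^n := by
    intro n
    have := hnext (y n) n (hmem n)
    rw [hysucc]; exact this
  have hchain : ∀ m n, m ≤ n → y n ∈ D (y m) := by
    intro m n h
    induction n, h using Nat.le_induction with
    | base => exact hDself _ (hmem m)
    | succ n hmn ih => exact htrans _ _ _ ih (hstep n).1
  have hdist : ∀ m n, m ≤ n → g (y n) + (1/2) * dist (y m) (y n) ≤ g (y m) :=
    fun m n h => (hchain m n h).2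
  have hanti : Antitone fun n => g (y n) := by
    apply antitone_nat_of_succ_le
    intro n
    have h1 := hdist n (n+1) (Nat.le_succ n)
    have h2 : (0:ℝ) ≤ dist (y n) (y (n+1)) := dist_nonneg
    show g (y (n+1)) ≤ g (y n)
    linarith
  have hbdd' : BddBelow (Set.range fun n => g (y n)) :=
    ⟨0, by rintro a ⟨n, rfl⟩; exact hg0 _ (hmem n)⟩
  have hgtend : Tendsto (fun n => g (y n)) atTop (𝓝 (⨅ n, g (y n))) :=
    tendsto_atTop_ciInf hanti hbdd'
  have hLle : ∀ n, (⨅ n, g (y n)) ≤ g (y n) := fun n => ciInf_le hbdd' n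
  have hcauchy : CauchySeq y := by
    rw [Metric.cauchySeq_iff']
    intro ε hε
    have hev : ∀ᶠ n in atTop, dist (g (y n)) (⨅ n, g (y n)) < ε/4 :=
      (Metric.tendsto_nhds.mp hgtend) (ε/4) (by linarith)
    obtain ⟨N, hN⟩ := eventually_atTop.mp hev
    refine ⟨N, fun n hn => ?_⟩
    have h1 := hdist N n hn
    have h2 := hLle n
    have h3 : |g (y N) - ⨅ n, g (y n)| < ε/4 := by
      have := hN N le_rfl; rwa [Real.dist_eq] at this
    have h4 := abs_lt.mp h3
    rw [dist_comm]
    have h5 : (0:ℝ) ≤ dist (y N) (y n) := dist_nonneg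
    linarith [h4.2]
  obtain ⟨Y, hYs, hYt⟩ := cauchySeq_tendsto_of_isComplete hs hmem hcauchy
  have hDclosed : ∀ z, IsClosed (D z) := by
    intro z
    exact IsClosed.inter hs.isClosed
      (isClosed_le (hg.add (continuous_const.mul (continuous_const.dist continuous_id)))
        continuous_const)
  have hYD : ∀ n, Y ∈ D (y n) := by
    intro n
    refine (hDclosed (y n)).mem_of_tendsto hYt ?_
    exact eventually_atTop.mpr ⟨n, fun m hm => hchain n m hm⟩
  have hY0 := hYD 0
  rw [hy0] at hY0
  refine ⟨Y, hYs, hY0.2, ?_⟩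
  intro z hz hle
  have hzD : ∀ n, z ∈ D (y n) := fun n => htrans _ _ _ (hYD n) ⟨hz, hle⟩
  have hgYle : ∀ n : ℕ, g Y ≤ g z + (1/2)^n := by
    intro n
    have h1 : sInf (g '' D (y n)) ≤ g z := csInf_le (hbdd _) ⟨z, hzD n, rfl⟩
    have h2 := (hstep n).2
    have h3 := (hYD (n+1)).2
    have h4 : (0:ℝ) ≤ dist (y (n+1)) Y := dist_nonneg
    linarith
  have hgYz : g Y ≤ g z := by
    refine le_of_forall_pos_le_add ?_
    intro ε hε
    obtain ⟨n, hn⟩ := exists_pow_lt_of_lt_one hε (by norm_num : (1:ℝ)/2 < 1)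
    linarith [hgYle n]
  have hd0 : dist Y z ≤ 0 := by linarith
  exact (dist_eq_zero.mp (le_antisymm hd0 dist_nonneg)).symm

/-- Openness criterion for distance maps: if at every point of the open set `V` and
for every coordinate `i` there are unit directions (starting directions of unit-speed
geodesics) `v_i^±` with `±D_x f_i(v_i^±) > 1 - ρ` and `|D_x f_j(v_i^±)| < 2ρ` for
`j ≠ i`, where `ρ = 1/(4k)`, then `F = (f_1,...,f_k)` is `2`-open for the `L¹`-norm. -/
theorem stmt6 {X : Type*} [MetricSpace X] (V : Set X) (hV : IsOpen V)
    (k : ℕ) (hk : 0 < k) (p : Fin k → X)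
    (f : Fin k → X → ℝ) (hf : ∀ i x, f i x = dist (p i) x)
    (hdir : ∀ x ∈ V, ∀ i : Fin k, ∀ σ : Bool,
      ∃ γ : ℝ → X, γ 0 = x ∧
        (∃ ε > 0, ∀ s ∈ Icc (0 : ℝ) ε, ∀ t ∈ Icc (0 : ℝ) ε, dist (γ s) (γ t) = |s - t|) ∧
        ∃ d : Fin k → ℝ,
          (∀ j, HasDerivWithinAt (fun t => f j (γ t)) (d j) (Ici (0 : ℝ)) 0) ∧
          (if σ then d i > 1 - 1 / (4 * k) else d i < -(1 - 1 / (4 * k))) ∧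
          ∀ j, j ≠ i → |d j| < 2 * (1 / (4 * k))) :
    ∀ x ∈ V, ∀ r : ℝ, 0 < r → IsComplete (closedBall x (2 * r)) →
      closedBall x (2 * r) ⊆ V →
      ∀ tt : Fin k → ℝ, (∑ i, |tt i - f i x|) < r →
        ∃ y ∈ ball x (2 * r), ∀ i, f i y = tt i := by
  intro x hx r hr hcomp hsub tt htt
  classical
  have hk1 : (1:ℝ) ≤ (k:ℝ) := by exact_mod_cast hk
  have hkpos : (0:ℝ) < (k:ℝ) := by linarith
  have hkne : (k:ℝ) ≠ 0 := ne_of_gt hkpos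
  set δ : ℝ := 1/(8*(k:ℝ)*(k:ℝ)) with hδdef
  have hδ : 0 < δ := by positivity
  set c1 : ℝ := 1 - 1/(4*(k:ℝ)) - δ with hc1def
  set c2 : ℝ := 2*(1/(4*(k:ℝ))) + δ with hc2def
  set g : X → ℝ := fun z => ∑ i, |tt i - f i z| with hgdef
  have hfc : ∀ i, Continuous (f i) := by
    intro i
    have : f i = fun z => dist (p i) z := funext (hf i)
    rw [this]; exact continuous_const.dist continuous_id
  have hgc : Continuous g := by
    apply continuous_finset_sum
    intro i _
    exact (continuous_const.sub (hfc i)).abs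
  have hg0 : ∀ z ∈ closedBall x (2*r), 0 ≤ g z := fun z _ =>
    Finset.sum_nonneg fun i _ => abs_nonneg _
  have hxmem : x ∈ closedBall x (2*r) := mem_closedBall_self (by linarith)
  obtain ⟨Y, hYs, hYle, hmin⟩ := myEkeland hcomp hgc hg0 hxmem
  have hgx : g x < r := htt
  have hgY0 : 0 ≤ g Y := hg0 Y hYs
  have hdxY : dist x Y < 2*r := by linarith
  have hgY : g Y = 0 := by
    by_contra hne
    have hgYpos : 0 < g Y := lt_of_le_of_ne hgY0 (Ne.symm hne)
    have hex : ∃ i, 0 < |tt i - f i Y| := by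
      by_contra hc
      push_neg at hc
      exact hne (Finset.sum_eq_zero fun i _ => le_antisymm (hc i) (abs_nonneg _))
    obtain ⟨i, hi⟩ := hex
    have hYV : Y ∈ V := hsub hYs
    obtain ⟨γ, hγ0, ⟨ε, hε, hgeo⟩, d, hder, hdi, hdj⟩ :=
      hdir Y hYV i (decide (f i Y < tt i))
    -- slope bounds
    have hslope : ∀ j, Tendsto (slope (fun u => f j (γ u)) 0) (𝓝[Ioi (0:ℝ)] 0) (𝓝 (d j)) := by
      intro j
      have h := (hasDerivWithinAt_iff_tendsto_slope.mp (hder j))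
      exact h.mono_left (nhdsWithin_mono _ (fun u hu => ⟨mem_Ici.mpr (le_of_lt hu), ne_of_gt hu⟩))
    have hslopes : ∀ j, ∀ᶠ t in 𝓝[Ioi (0:ℝ)] 0, |slope (fun u => f j (γ u)) 0 t - d j| < δ := by
      intro j
      have := Metric.tendsto_nhds.mp (hslope j) δ hδ
      simpa [Real.dist_eq] using this
    have hall : ∀ᶠ t in 𝓝[Ioi (0:ℝ)] 0, ∀ j, |slope (fun u => f j (γ u)) 0 t - d j| < δ :=
      eventually_all.mpr hslopes
    have hc2pos : 0 < |tt i - f i Y| / (|d i| + δ) := div_pos hi (by positivity)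
    have hc3pos : 0 < 2*r - dist x Y := by linarith
    set m : ℝ := min ε (min (|tt i - f i Y| / (|d i| + δ)) (2*r - dist x Y)) with hmdef
    have hmpos : 0 < m := lt_min hε (lt_min hc2pos hc3pos)
    have hsmall : ∀ᶠ t in 𝓝[Ioi (0:ℝ)] 0, t < m := by
      have h' : ∀ᶠ t in 𝓝 (0:ℝ), t < m := by
        filter_upwards [Iio_mem_nhds hmpos] with t ht using ht
      exact h'.filter_mono nhdsWithin_le_nhds
    have hposall : ∀ᶠ t in 𝓝[Ioi (0:ℝ)] 0, 0 < t := by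
      filter_upwards [self_mem_nhdsWithin] with t ht using ht
    obtain ⟨t, htall, htm, htpos⟩ := (hall.and (hsmall.and hposall)).exists
    have hslopet : ∀ j, |f j (γ t) - f j Y - d j * t| < δ * t := by
      intro j
      have h1 := htall j
      have h2 : |slope (fun u => f j (γ u)) 0 t - d j| * t < δ * t :=
        mul_lt_mul_of_pos_right h1 htpos
      have he : slope (fun u => f j (γ u)) 0 t - d j = (f j (γ t) - f j Y - d j * t) / t := by
        simp only [slope_def_field, sub_zero, hγ0]
        field_simp
      have h3 : |slope (fun u => f j (γ u)) 0 t - d j| * t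
          = |f j (γ t) - f j Y - d j * t| := by
        rw [he, abs_div, abs_of_pos htpos, div_mul_cancel₀ _ (ne_of_gt htpos)]
      rwa [h3] at h2
    have htc2 : (|d i| + δ) * t < |tt i - f i Y| := by
      have h1 : t < |tt i - f i Y| / (|d i| + δ) :=
        lt_of_lt_of_le htm ((min_le_right _ _).trans (min_le_left _ _))
      have h2 := (lt_div_iff₀ (by positivity : (0:ℝ) < |d i| + δ)).mp h1
      linarith [h2]
    have htermi : |tt i - f i (γ t)| ≤ |tt i - f i Y| - c1 * t := by
      have hs1 := abs_lt.mp (hslopet i)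
      have habs1 : d i ≤ |d i| := le_abs_self _
      have habs2 : -|d i| ≤ d i := neg_abs_le _
      by_cases hcase : f i Y < tt i
      · have hdi' : 1 - 1/(4*(k:ℝ)) < d i := by simpa [hcase] using hdi
        have hM : |tt i - f i Y| = tt i - f i Y := abs_of_pos (by linarith)
        have hdt : d i * t ≤ |d i| * t := mul_le_mul_of_nonneg_right habs1 htpos.le
        have hpos2 : 0 < tt i - f i (γ t) := by linarith [hs1.2, hdt, htc2, hM]
        rw [abs_of_pos hpos2, hc1def]
        linarith [hs1.1, hM, mul_lt_mul_of_pos_right hdi' htpos]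
      · have hcase' : tt i < f i Y := by
          rcases lt_or_eq_of_le (not_lt.mp hcase) with h | h
          · exact h
          · exfalso; rw [← h] at hi; simp at hi
        have hdi' : d i < -(1 - 1/(4*(k:ℝ))) := by simpa [hcase] using hdi
        have hM : |tt i - f i Y| = f i Y - tt i := by
          rw [abs_sub_comm]; exact abs_of_pos (by linarith)
        have hdt2 : -|d i| * t ≤ d i * t := mul_le_mul_of_nonneg_right habs2 htpos.le
        have hneg2 : 0 < f i (γ t) - tt i := by linarith [hs1.1, hdt2, htc2, hM]
        have habseq : |tt i - f i (γ t)| = f i (γ t) - tt i := by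
          rw [abs_sub_comm]; exact abs_of_pos hneg2
        rw [habseq, hc1def]
        linarith [hs1.2, hM, mul_lt_mul_of_pos_right hdi' htpos]
    have htermj : ∀ j, j ≠ i → |tt j - f j (γ t)| ≤ |tt j - f j Y| + c2 * t := by
      intro j hj
      have hdj' := hdj j hj
      have h1 : |tt j - f j (γ t)| ≤ |tt j - f j Y| + |f j Y - f j (γ t)| := abs_sub_le _ _ _
      have h2 : |f j Y - f j (γ t)| ≤ δ * t + |d j| * t := by
        have h3 : |f j (γ t) - f j Y| ≤ |f j (γ t) - f j Y - d j * t| + |d j * t| := by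
          have := abs_add_le (f j (γ t) - f j Y - d j * t) (d j * t)
          simpa using this
        have h4 : |d j * t| = |d j| * t := by rw [abs_mul, abs_of_pos htpos]
        rw [abs_sub_comm]
        linarith [hslopet j]
      have h5 : |d j| * t ≤ 2*(1/(4*(k:ℝ))) * t :=
        mul_le_mul_of_nonneg_right (le_of_lt hdj') htpos.le
      rw [hc2def]
      linarith
    have hsplit1 : g (γ t) = |tt i - f i (γ t)| + ∑ j ∈ Finset.univ.erase i, |tt j - f j (γ t)| :=
      (Finset.add_sum_erase _ _ (Finset.mem_univ i)).symm
    have hsplit2 : g Y = |tt i - f i Y| + ∑ j ∈ Finset.univ.erase i, |tt j - f j Y| :=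
      (Finset.add_sum_erase _ _ (Finset.mem_univ i)).symm
    have hcard : (Finset.univ.erase i).card = k - 1 := by
      rw [Finset.card_erase_of_mem (Finset.mem_univ i), Finset.card_univ, Fintype.card_fin]
    have hsum23 : ∑ j ∈ Finset.univ.erase i, |tt j - f j (γ t)|
        ≤ (∑ j ∈ Finset.univ.erase i, |tt j - f j Y|) + ((k:ℝ) - 1) * (c2 * t) := by
      have h1 : ∑ j ∈ Finset.univ.erase i, |tt j - f j (γ t)|
          ≤ ∑ j ∈ Finset.univ.erase i, (|tt j - f j Y| + c2 * t) :=
        Finset.sum_le_sum fun j hj => htermj j (Finset.ne_of_mem_erase hj)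
      have h2 : ∑ j ∈ Finset.univ.erase i, (|tt j - f j Y| + c2 * t)
          = (∑ j ∈ Finset.univ.erase i, |tt j - f j Y|) + ((k:ℝ) - 1) * (c2 * t) := by
        rw [Finset.sum_add_distrib, Finset.sum_const, hcard, nsmul_eq_mul]
        congr 2
        rw [Nat.cast_sub hk]
        norm_num
      linarith
    have hcoeff : ((k:ℝ)-1) * (c2 * t) - c1 * t = -((1/2 + 1/(8*(k:ℝ))) * t) := by
      rw [hc1def, hc2def, hδdef]
      field_simp
      ring
    have hsum : g (γ t) ≤ g Y - (1/2 + 1/(8*(k:ℝ))) * t := by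
      rw [hsplit2]
      clear_value c1 c2 δ g m
      linarith [hsplit1, htermi, hsum23, hcoeff]
    have htε : t ≤ ε := le_of_lt (lt_of_lt_of_le htm (min_le_left _ _))
    have hd1 : dist Y (γ t) = t := by
      have h := hgeo 0 ⟨le_rfl, hε.le⟩ t ⟨htpos.le, htε⟩
      rw [hγ0] at h
      rw [h, zero_sub, abs_neg, abs_of_pos htpos]
    have htc3 : t ≤ 2*r - dist x Y :=
      le_of_lt (lt_of_lt_of_le htm ((min_le_right _ _).trans (min_le_right _ _)))
    have hzt : γ t ∈ closedBall x (2*r) := by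
      have h1 := dist_triangle x Y (γ t)
      rw [hd1] at h1
      have : dist (γ t) x ≤ 2*r := by rw [dist_comm]; linarith
      exact this
    have h8 : 0 < 1/(8*(k:ℝ)) * t := by positivity
    have hminle : g (γ t) + (1/2) * dist Y (γ t) ≤ g Y := by
      rw [hd1]
      linarith [hsum, h8]
    have heq := hmin (γ t) hzt hminle
    rw [heq] at hd1
    simp at hd1
    linarith [hd1, htpos]
  refine ⟨Y, ?_, ?_⟩
  · rw [mem_ball, dist_comm]; exact hdxY
  · intro i
    have hgY' : (∑ j, |tt j - f j Y|) = 0 := hgY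
    have h0 : |tt i - f i Y| = 0 :=
      (Finset.sum_eq_zero_iff_of_nonneg (fun j _ => abs_nonneg (tt j - f j Y))).mp hgY' i
        (Finset.mem_univ i)
    have := abs_eq_zero.mp h0
    linarith
end

section
/- Let F: V → ℝ^k be a (k,δ)-strainer map on an open nonempty subset V of a tiny ball U in a GCBA space, with δ ≤ 1/(4k). Then F is L-Lipschitz and L-open with L = 2√k; in particular, F(V) is open in ℝ^k and the Hausdorff dimension of V is at least k. -/
open Metric Set Filter
open scoped ENNReal Topology

set_option maxHeartbeats 1000000 in
/-- A `(k,δ)`-strainer map `F` (a distance map whose straining directions satisfy the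
first-variation estimates encoded by `hdir`) with `δ ≤ 1/(4k)` on an open nonempty
subset `V` of a tiny ball is `L`-Lipschitz and `L`-open with `L = 2√k`; in particular
`F(V)` is open and the Hausdorff dimension of `V` is at least `k`. -/
theorem stmt7 {X : Type*} [MetricSpace X] (x₀ : X) (r₀ : ℝ) (hr₀ : 0 < r₀)
    (hcomp : IsCompact (closedBall x₀ (10 * r₀)))
    (V : Set X) (hV : IsOpen V) (hVne : V.Nonempty) (hVsub : V ⊆ ball x₀ r₀)
    (k : ℕ) (hk : 0 < k) (δ : ℝ) (hδ : 0 < δ) (hδk : δ ≤ 1 / (4 * k))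
    (p : Fin k → X)
    (F : X → EuclideanSpace ℝ (Fin k)) (hF : ∀ x i, F x i = dist (p i) x)
    (hdir : ∀ x ∈ V, ∀ i : Fin k, ∀ σ : Bool,
      ∃ γ : ℝ → X, γ 0 = x ∧
        (∃ ε > 0, ∀ s ∈ Icc (0 : ℝ) ε, ∀ t ∈ Icc (0 : ℝ) ε, dist (γ s) (γ t) = |s - t|) ∧
        ∃ d : Fin k → ℝ,
          (∀ j, HasDerivWithinAt (fun t => dist (p j) (γ t)) (d j) (Ici (0 : ℝ)) 0) ∧
          (if σ then d i > 1 - δ else d i < -(1 - δ)) ∧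
          ∀ j, j ≠ i → |d j| < 2 * δ) :
    (∀ x ∈ V, ∀ y ∈ V, dist (F x) (F y) ≤ 2 * Real.sqrt k * dist x y) ∧
    (∀ x ∈ V, ∀ r : ℝ, 0 < r → closedBall x (2 * Real.sqrt k * r) ⊆ V →
      ball (F x) r ⊆ F '' ball x (2 * Real.sqrt k * r)) ∧
    IsOpen (F '' V) ∧
    (k : ℝ≥0∞) ≤ dimH V := by
  have hkpos : (0:ℝ) < k := by exact_mod_cast hk
  have hsk : (0:ℝ) < Real.sqrt k := Real.sqrt_pos.2 hkpos
  set L : ℝ := 2 * Real.sqrt k with hLdef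
  have hL : 0 < L := by positivity
  -- global Lipschitz bound with constant √k
  have hlip : ∀ x y : X, dist (F x) (F y) ≤ Real.sqrt k * dist x y := by
    intro x y
    rw [EuclideanSpace.dist_eq]
    have h1 : ∀ i : Fin k, dist (F x i) (F y i) ^ 2 ≤ dist x y ^ 2 := by
      intro i
      have h : dist (F x i) (F y i) ≤ dist x y := by
        rw [hF, hF, Real.dist_eq, dist_comm (p i) x, dist_comm (p i) y]
        exact abs_dist_sub_le x y (p i)
      have h0 : (0:ℝ) ≤ dist (F x i) (F y i) := dist_nonneg
      nlinarith
    calc Real.sqrt (∑ i, dist (F x i) (F y i) ^ 2)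
        ≤ Real.sqrt (∑ _i : Fin k, dist x y ^ 2) :=
          Real.sqrt_le_sqrt (Finset.sum_le_sum fun i _ => h1 i)
      _ = Real.sqrt ((k:ℝ) * dist x y ^ 2) := by
          rw [Finset.sum_const, Finset.card_univ, Fintype.card_fin, nsmul_eq_mul]
      _ = Real.sqrt k * dist x y := by
          rw [Real.sqrt_mul hkpos.le, Real.sqrt_sq dist_nonneg]
  have hlipW : LipschitzWith ⟨Real.sqrt k, Real.sqrt_nonneg _⟩ F :=
    LipschitzWith.of_dist_le_mul fun x y => hlip x y
  -- core openness property
  have hcore : ∀ x ∈ V, ∀ r : ℝ, 0 < r → closedBall x (L * r) ⊆ V →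
      ball (F x) r ⊆ F '' ball x (L * r) := by
    intro x hx r hr hKV v hv
    have hv' : dist (F x) v < r := by rw [dist_comm]; exact mem_ball.mp hv
    set K : Set X := closedBall x (L * r) with hKdef
    have hKsub : K ⊆ closedBall x₀ (10 * r₀) := by
      refine (hKV.trans hVsub).trans ?_
      exact ball_subset_closedBall.trans (closedBall_subset_closedBall (by linarith))
    have hKc : IsCompact K := hcomp.of_isClosed_subset isClosed_closedBall hKsub
    have hxK : x ∈ K := mem_closedBall_self (by positivity)
    set φ : X → ℝ := fun w => dist (F w) v + dist x w / L with hφdef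
    have hφcont : ContinuousOn φ K := by
      apply Continuous.continuousOn
      exact ((hlipW.continuous.dist continuous_const).add
        ((continuous_const.dist continuous_id).div_const L))
    obtain ⟨z, hzK, hzmin⟩ := hKc.exists_isMinOn ⟨x, hxK⟩ hφcont
    have hzmin' : ∀ w ∈ K, φ z ≤ φ w := fun w hw => isMinOn_iff.mp hzmin w hw
    have hzV : z ∈ V := hKV hzK
    have hφz : dist (F z) v + dist x z / L ≤ dist (F x) v := by
      have h := hzmin' x hxK
      simp only [hφdef, dist_self, zero_div, add_zero] at h
      exact h
    have hxz : dist x z < L * r := by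
      have h1 : dist x z / L ≤ dist (F x) v := by
        have hnn : (0:ℝ) ≤ dist (F z) v := dist_nonneg
        linarith
      have h2 : dist x z / L < r := lt_of_le_of_lt h1 hv'
      calc dist x z = dist x z / L * L := by field_simp
        _ < r * L := by exact mul_lt_mul_of_pos_right h2 hL
        _ = L * r := mul_comm _ _
    -- the minimizer satisfies F z = v
    have hFz : F z = v := by
      by_contra hne
      have hgz : 0 < dist (F z) v := dist_pos.2 hne
      set b : Fin k → ℝ := fun j => F z j - v j with hbdef
      obtain ⟨i, -, hi⟩ := Finset.exists_max_image Finset.univ (fun j => |b j|)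
        ⟨⟨0, hk⟩, Finset.mem_univ _⟩
      have hiM : ∀ j, |b j| ≤ |b i| := fun j => hi j (Finset.mem_univ j)
      have hdistb : dist (F z) v = Real.sqrt (∑ j, b j ^ 2) := by
        rw [EuclideanSpace.dist_eq]
        congr 1
        exact Finset.sum_congr rfl fun j _ => by
          simp only [hbdef, Real.dist_eq, sq_abs]
      have hSpos : 0 < ∑ j, b j ^ 2 := by
        rw [hdistb] at hgz; exact Real.sqrt_pos.mp hgz
      have hS_le : ∑ j, b j ^ 2 ≤ (k:ℝ) * |b i| ^ 2 := by
        calc ∑ j, b j ^ 2 ≤ ∑ _j : Fin k, |b i| ^ 2 := by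
              refine Finset.sum_le_sum fun j _ => ?_
              rw [← sq_abs (b j)]
              nlinarith [abs_nonneg (b j), hiM j]
          _ = (k:ℝ) * |b i| ^ 2 := by
              rw [Finset.sum_const, Finset.card_univ, Fintype.card_fin, nsmul_eq_mul]
      have hMpos : 0 < |b i| := by
        rcases (abs_nonneg (b i)).lt_or_eq with h | h
        · exact h
        · exfalso
          rw [← h] at hS_le
          simp only [ne_eq, OfNat.ofNat_ne_zero, not_false_eq_true, zero_pow,
            mul_zero] at hS_le
          linarith
      have hbi0 : b i ≠ 0 := abs_pos.mp hMpos
      obtain ⟨γ, hγ0, ⟨ε, hε, hgeo⟩, d, hd, hdi, hdj⟩ := hdir z hzV i (decide (b i < 0))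
      -- key estimate on b i * d i
      have hbidi : b i * d i ≤ -|b i| + δ * |b i| := by
        simp only [decide_eq_true_eq] at hdi
        rcases lt_or_gt_of_ne hbi0 with h | h
        · rw [if_pos h] at hdi
          have hbM : b i = -|b i| := by rw [abs_of_neg h]; ring
          conv_lhs => rw [hbM]
          nlinarith [mul_le_mul_of_nonneg_right hdi.le (abs_nonneg (b i))]
        · rw [if_neg (not_lt.2 h.le)] at hdi
          have hbM : b i = |b i| := (abs_of_pos h).symm
          conv_lhs => rw [hbM]
          nlinarith [mul_le_mul_of_nonneg_left hdi.le (abs_nonneg (b i))]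
      have hδ4k : δ * (4 * (k:ℝ)) ≤ 1 := by
        rw [le_div_iff₀ (by positivity)] at hδk; linarith
      have hsum : (∑ j, b j * d j) < -(|b i| / 2) := by
        have hsplit : ∑ j, b j * d j
            = b i * d i + ∑ j ∈ Finset.univ.erase i, b j * d j :=
          (Finset.add_sum_erase _ _ (Finset.mem_univ i)).symm
        have hrest : ∑ j ∈ Finset.univ.erase i, b j * d j
            ≤ ((k:ℝ) - 1) * (2 * δ * |b i|) := by
          calc ∑ j ∈ Finset.univ.erase i, b j * d j
              ≤ ∑ _j ∈ Finset.univ.erase i, 2 * δ * |b i| := by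
                refine Finset.sum_le_sum fun j hj => ?_
                have hjne : j ≠ i := Finset.ne_of_mem_erase hj
                have h1 : b j * d j ≤ |b j| * |d j| := by
                  rw [← abs_mul]; exact le_abs_self _
                have h2 : |b j| * |d j| ≤ |b i| * (2 * δ) :=
                  mul_le_mul (hiM j) (hdj j hjne).le (abs_nonneg _) (abs_nonneg _)
                linarith
            _ = ((Finset.univ.erase i).card : ℝ) * (2 * δ * |b i|) := by
                rw [Finset.sum_const, nsmul_eq_mul]
            _ = ((k:ℝ) - 1) * (2 * δ * |b i|) := by
                rw [Finset.card_erase_of_mem (Finset.mem_univ i), Finset.card_univ,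
                  Fintype.card_fin, Nat.cast_sub hk, Nat.cast_one]
        have hrest2 : ∑ j ∈ Finset.univ.erase i, b j * d j
            ≤ |b i| / 2 - 2 * δ * |b i| := by
          refine hrest.trans ?_
          nlinarith [mul_le_mul_of_nonneg_right hδ4k hMpos.le]
        rw [hsplit]
        have hδM : 0 < δ * |b i| := mul_pos hδ hMpos
        generalize hg1 : b i * d i = A at hbidi ⊢
        generalize hg2 : (∑ j ∈ Finset.univ.erase i, b j * d j) = B at hrest2 ⊢
        generalize hg3 : |b i| = M at hbidi hrest2 hδM ⊢
        linarith
      -- the function S(t) = ∑ (dist(p j, γ t) - v j)^2 and its derivative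
      set S : ℝ → ℝ := fun t => ∑ j, (dist (p j) (γ t) - v j) ^ 2 with hSdef
      have hS0 : S 0 = ∑ j, b j ^ 2 := by
        simp only [hSdef, hγ0]
        exact Finset.sum_congr rfl fun j _ => by simp only [hbdef, ← hF]
      have hSderiv : HasDerivWithinAt S (∑ j, 2 * b j * d j) (Ici 0) 0 := by
        refine HasDerivWithinAt.fun_sum fun j _ => ?_
        have h1 := ((hd j).sub_const (v j)).fun_pow 2
        convert h1 using 1
        rfl
        simp only [hγ0, ← hF, hbdef]
        push_cast
        ring
      have hS0pos : 0 < S 0 := by rw [hS0]; exact hSpos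
      have hsqrtle : Real.sqrt (S 0) ≤ Real.sqrt k * |b i| := by
        rw [hS0]
        calc Real.sqrt (∑ j, b j ^ 2) ≤ Real.sqrt ((k:ℝ) * |b i| ^ 2) :=
              Real.sqrt_le_sqrt hS_le
          _ = Real.sqrt k * |b i| := by
              rw [Real.sqrt_mul hkpos.le, Real.sqrt_sq (abs_nonneg _)]
      have hsqrtpos : 0 < Real.sqrt (S 0) := Real.sqrt_pos.2 hS0pos
      have hψderiv : HasDerivWithinAt (fun t => dist (F (γ t)) v)
          ((∑ j, 2 * b j * d j) / (2 * Real.sqrt (S 0))) (Ici 0) 0 := by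
        have h1 := hSderiv.sqrt (ne_of_gt hS0pos)
        have hψeq : ∀ t : ℝ, dist (F (γ t)) v = Real.sqrt (S t) := by
          intro t
          rw [EuclideanSpace.dist_eq]
          simp only [hSdef]
          congr 1
          exact Finset.sum_congr rfl fun j _ => by
            rw [Real.dist_eq, sq_abs, hF]
        exact HasDerivWithinAt.congr h1 (fun t _ => hψeq t) (hψeq 0)
      have hD : (∑ j, 2 * b j * d j) / (2 * Real.sqrt (S 0)) < -(1/L) := by
        rw [div_lt_iff₀ (by positivity)]
        have h1 : (∑ j, 2 * b j * d j) = 2 * ∑ j, b j * d j := by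
          rw [Finset.mul_sum]
          exact Finset.sum_congr rfl fun j _ => (mul_assoc 2 (b j) (d j))
        have h2 : -(1/L) * (2 * Real.sqrt (S 0)) = -(Real.sqrt (S 0) / Real.sqrt k) := by
          rw [hLdef]; field_simp
        have h3 : Real.sqrt (S 0) / Real.sqrt k ≤ |b i| :=
          (div_le_iff₀ hsk).2 (by linarith [hsqrtle])
        rw [h1, h2]
        linarith
      rw [hasDerivWithinAt_iff_tendsto_slope, Set.Ici_sdiff_left] at hψderiv
      have hev1 : ∀ᶠ t in 𝓝[>] (0:ℝ),
          slope (fun t => dist (F (γ t)) v) 0 t < -(1/L) :=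
        hψderiv.eventually_lt_const hD
      have hmin0 : 0 < min ε (L * r - dist x z) := lt_min hε (by linarith)
      have hev2 : ∀ᶠ t in 𝓝[>] (0:ℝ), t ∈ Ioc (0:ℝ) (min ε (L * r - dist x z)) :=
        Ioc_mem_nhdsGT hmin0
      obtain ⟨t, hts, htIoc⟩ := (hev1.and hev2).exists
      obtain ⟨ht0, htm⟩ := htIoc
      have htε : t ≤ ε := htm.trans (min_le_left _ _)
      have htr : t ≤ L * r - dist x z := htm.trans (min_le_right _ _)
      have hzt : dist z (γ t) = t := by
        have h := hgeo 0 ⟨le_refl 0, hε.le⟩ t ⟨ht0.le, htε⟩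
        rw [hγ0] at h
        rw [h, abs_of_nonpos (by linarith), neg_sub, sub_zero]
      have hγtK : γ t ∈ K := by
        rw [hKdef, mem_closedBall, dist_comm]
        calc dist x (γ t) ≤ dist x z + dist z (γ t) := dist_triangle _ _ _
          _ = dist x z + t := by rw [hzt]
          _ ≤ L * r := by linarith
      have hslope : dist (F (γ t)) v < dist (F z) v - t / L := by
        simp only [slope_def_field, sub_zero] at hts
        have h1 : dist (F (γ t)) v - dist (F (γ 0)) v < -(1/L) * t :=
          (div_lt_iff₀ ht0).mp hts
        rw [hγ0] at h1
        have h2 : -(1/L) * t = -(t/L) := by ring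
        linarith
      have hfinal : φ z ≤ φ (γ t) := hzmin' (γ t) hγtK
      have hcontra : φ (γ t) < φ z := by
        simp only [hφdef]
        have h1 : dist x (γ t) ≤ dist x z + t := by
          calc dist x (γ t) ≤ dist x z + dist z (γ t) := dist_triangle _ _ _
            _ = dist x z + t := by rw [hzt]
        have h2 : dist x (γ t) / L ≤ (dist x z + t) / L := by gcongr
        calc dist (F (γ t)) v + dist x (γ t) / L
            < (dist (F z) v - t / L) + (dist x z + t) / L :=
              add_lt_add_of_lt_of_le hslope h2
          _ = dist (F z) v + dist x z / L := by ring
      exact absurd hfinal (not_le.2 hcontra)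
    exact ⟨z, by rw [mem_ball, dist_comm]; exact hxz, hFz⟩
  -- assemble the four conclusions
  have hopenim : IsOpen (F '' V) := by
    rw [Metric.isOpen_iff]
    rintro y ⟨x, hx, rfl⟩
    obtain ⟨ρ, hρ, hsub⟩ := Metric.isOpen_iff.mp hV x hx
    refine ⟨ρ / 2 / L, by positivity, ?_⟩
    have hLr : L * (ρ / 2 / L) = ρ / 2 := by field_simp
    have h1 := hcore x hx (ρ / 2 / L) (by positivity)
      (by rw [hLr]; exact (closedBall_subset_ball (by linarith)).trans hsub)
    refine h1.trans (image_mono ?_)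
    rw [hLr]
    exact (ball_subset_ball (by linarith)).trans hsub
  refine ⟨fun x _ y _ => ?_, fun x hx r hr hsub => hcore x hx r hr hsub, hopenim, ?_⟩
  · calc dist (F x) (F y) ≤ Real.sqrt k * dist x y := hlip x y
      _ ≤ L * dist x y := by
        rw [hLdef]
        have h0 : (0:ℝ) ≤ dist x y := dist_nonneg
        nlinarith [mul_nonneg hsk.le h0]
  · obtain ⟨x, hx⟩ := hVne
    have h1 : dimH (F '' V)
        = (Module.finrank ℝ (EuclideanSpace ℝ (Fin k)) : ℝ≥0∞) :=
      Real.dimH_of_mem_nhds (hopenim.mem_nhds ⟨x, hx, rfl⟩)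
    have h2 : dimH (F '' V) ≤ dimH V := hlipW.dimH_image_le V
    calc (k : ℝ≥0∞) = dimH (F '' V) := by rw [h1, finrank_euclideanSpace_fin]
      _ ≤ dimH V := h2
end

section
/- Let F and G be opposite (k,δ)-strainer maps on an open subset V of a tiny ball U consisting of k-regular points, with δ ≤ 1/(50k²), and let f_1,...,f_k and g_1,...,g_k be their coordinate distance functions. Then the function g = (1/k)·Σ_{i=1}^k g_i is convex, 1-Lipschitz, and α-special with α = 1/(4k²): for every x ∈ V and every unit direction v ∈ Σ_x with D_x f_i(v) ≥ 0 for all i, one has D_x g(v) ≤ −1/(4k²). -/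
open Metric Set

/-- `γ` restricted to `[a,b]` is a unit-speed geodesic segment. -/
def IsGeodSeg {X : Type*} [MetricSpace X] (γ : ℝ → X) (a b : ℝ) : Prop :=
  ∀ s ∈ Set.Icc a b, ∀ t ∈ Set.Icc a b, dist (γ s) (γ t) = |s - t|

/-- `f` is convex on `U`. -/
def IsConvexFunOn {X : Type*} [MetricSpace X] (U : Set X) (f : X → ℝ) : Prop :=
  ∀ (γ : ℝ → X) (a b : ℝ), a ≤ b → (∀ t ∈ Set.Icc a b, γ t ∈ U) → IsGeodSeg γ a b →
    ConvexOn ℝ (Set.Icc a b) (f ∘ γ)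

set_option maxHeartbeats 1000000 in
/-- Let `F = (d_{p_i})` and `G = (d_{q_i})` be opposite `(k,δ)`-strainer maps on the
open set `V ⊆ U`, `δ ≤ 1/(50k²)`.  The available facts are hypotheses: each `d_{q_i}`
is convex and `1`-Lipschitz (`hconvlip`); if a directional derivative `D_x f_i(v) ≥ 0`
then `D_x g_i(v) < δ` (`hsmall`); and `|D_x G(v)| ≥ 1/(2√k)` for unit directions `v`
(`hbilip`).  Then `g = (1/k)·Σ g_i` is convex, `1`-Lipschitz and `α`-special with
`α = 1/(4k²)`: whenever all `D_x f_i(v) ≥ 0`, one has `D_x g(v) ≤ -1/(4k²)`. -/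
theorem stmt19 {X : Type*} [MetricSpace X] (k : ℕ) (hk : 0 < k)
    (δ : ℝ) (hδ : 0 < δ) (hδk : δ ≤ 1 / (50 * (k : ℝ) ^ 2))
    (V U : Set X) (hV : IsOpen V) (hVU : V ⊆ U)
    (p q : Fin k → X)
    (hconvlip : ∀ i, LipschitzWith 1 (fun x => dist (q i) x) ∧
      IsConvexFunOn U (fun x => dist (q i) x))
    (hsmall : ∀ x ∈ V, ∀ γ : ℝ → X, γ 0 = x →
      (∃ ε > 0, ∀ s ∈ Set.Icc (0 : ℝ) ε, ∀ t ∈ Set.Icc (0 : ℝ) ε,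
        dist (γ s) (γ t) = |s - t|) →
      ∀ d dg : Fin k → ℝ,
        (∀ i, HasDerivWithinAt (fun t => dist (p i) (γ t)) (d i) (Set.Ici (0 : ℝ)) 0) →
        (∀ i, HasDerivWithinAt (fun t => dist (q i) (γ t)) (dg i) (Set.Ici (0 : ℝ)) 0) →
        ∀ i, 0 ≤ d i → dg i < δ)
    (hbilip : ∀ x ∈ V, ∀ γ : ℝ → X, γ 0 = x →
      (∃ ε > 0, ∀ s ∈ Set.Icc (0 : ℝ) ε, ∀ t ∈ Set.Icc (0 : ℝ) ε,
        dist (γ s) (γ t) = |s - t|) →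
      ∀ dg : Fin k → ℝ,
        (∀ i, HasDerivWithinAt (fun t => dist (q i) (γ t)) (dg i) (Set.Ici (0 : ℝ)) 0) →
        (1 / (2 * Real.sqrt k)) ^ 2 ≤ ∑ i, dg i ^ 2) :
    LipschitzWith 1 (fun x => (1 / (k : ℝ)) * ∑ i, dist (q i) x) ∧
    IsConvexFunOn U (fun x => (1 / (k : ℝ)) * ∑ i, dist (q i) x) ∧
    ∀ x ∈ V, ∀ γ : ℝ → X, γ 0 = x →
      (∃ ε > 0, ∀ s ∈ Set.Icc (0 : ℝ) ε, ∀ t ∈ Set.Icc (0 : ℝ) ε,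
        dist (γ s) (γ t) = |s - t|) →
      ∀ d dg : Fin k → ℝ,
        (∀ i, HasDerivWithinAt (fun t => dist (p i) (γ t)) (d i) (Set.Ici (0 : ℝ)) 0) →
        (∀ i, HasDerivWithinAt (fun t => dist (q i) (γ t)) (dg i) (Set.Ici (0 : ℝ)) 0) →
        (∀ i, 0 ≤ d i) →
        (1 / (k : ℝ)) * ∑ i, dg i ≤ -(1 / (4 * (k : ℝ) ^ 2)) := by
  have hK0 : (0:ℝ) < k := by exact_mod_cast hk
  have hk1 : (1:ℝ) ≤ k := by exact_mod_cast hk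
  refine ⟨?_, ?_, ?_⟩
  · -- Lipschitz
    apply LipschitzWith.of_dist_le_mul
    intro x y
    have h1 : |∑ i, (dist (q i) x - dist (q i) y)| ≤ (k:ℝ) * dist x y := by
      calc |∑ i, (dist (q i) x - dist (q i) y)| ≤ ∑ i, |dist (q i) x - dist (q i) y| :=
            Finset.abs_sum_le_sum_abs _ _
        _ ≤ ∑ _i : Fin k, dist x y := Finset.sum_le_sum fun i _ => by
            rw [dist_comm (q i) x, dist_comm (q i) y]; exact abs_dist_sub_le x y (q i)
        _ = (k:ℝ) * dist x y := by simp [mul_comm]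
    rw [Real.dist_eq]
    have heq : (1/(k:ℝ)) * ∑ i, dist (q i) x - (1/(k:ℝ)) * ∑ i, dist (q i) y
        = (1/(k:ℝ)) * ∑ i, (dist (q i) x - dist (q i) y) := by
      rw [Finset.sum_sub_distrib]; ring
    rw [heq, abs_mul, abs_of_nonneg (by positivity : (0:ℝ) ≤ 1/(k:ℝ))]
    calc (1/(k:ℝ)) * |∑ i, (dist (q i) x - dist (q i) y)|
        ≤ (1/(k:ℝ)) * ((k:ℝ) * dist x y) := by
          apply mul_le_mul_of_nonneg_left h1 (by positivity)
      _ = dist x y := by field_simp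
      _ ≤ 1 * dist x y := by simp
  · -- Convex
    intro γ a b hab hmem hgeo
    have hsum : ConvexOn ℝ (Set.Icc a b) (fun t => ∑ i : Fin k, dist (q i) (γ t)) := by
      have h : ∀ s : Finset (Fin k), ConvexOn ℝ (Set.Icc a b)
          (fun t => ∑ i ∈ s, dist (q i) (γ t)) := by
        intro s
        induction s using Finset.induction with
        | empty => simpa using convexOn_const (0:ℝ) (convex_Icc a b)
        | insert _ _ hni ih =>
          simp only [Finset.sum_insert hni]
          exact ((hconvlip _).2 γ a b hab hmem hgeo).add ih
      exact h Finset.univ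
    have := hsum.smul (by positivity : (0:ℝ) ≤ 1/(k:ℝ))
    convert this using 1
    all_goals rfl
  · -- special
    intro x hx γ hγ0 hgeo d dg hd hdg hdpos
    have hδi : ∀ i, dg i < δ := fun i => hsmall x hx γ hγ0 hgeo d dg hd hdg i (hdpos i)
    have hsq : (1/(2*Real.sqrt k))^2 ≤ ∑ i, dg i^2 := hbilip x hx γ hγ0 hgeo dg hdg
    have hsqrt : Real.sqrt k ^ 2 = (k:ℝ) := Real.sq_sqrt hK0.le
    have hsq' : 1/(4*(k:ℝ)) ≤ ∑ i, dg i^2 := by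
      have h2 : (1/(2*Real.sqrt k))^2 = 1/(4*(k:ℝ)) := by
        rw [div_pow, mul_pow, hsqrt]; norm_num
      linarith [hsq, h2 ▸ hsq]
    set a : Fin k → ℝ := fun i => max (-(dg i)) 0 with ha
    set bb : Fin k → ℝ := fun i => max (dg i) 0 with hbb
    have haneg : ∀ i, 0 ≤ a i := fun i => le_max_right _ _
    have hab : ∀ i, dg i = bb i - a i := by
      intro i; rw [ha, hbb]; simp [max_zero_sub_max_neg_zero_eq_self]
    have hsqab : ∀ i, dg i ^ 2 = a i ^ 2 + bb i ^ 2 := by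
      intro i
      rcases le_total (dg i) 0 with h | h
      · simp [ha, hbb, max_eq_left (neg_nonneg.mpr h), max_eq_right h]
      · simp [ha, hbb, max_eq_right (neg_nonpos.mpr h), max_eq_left h]
    have hbδ : ∀ i, bb i ≤ δ := fun i => max_le (hδi i).le hδ.le
    set N := ∑ i, a i with hN
    have hN0 : 0 ≤ N := Finset.sum_nonneg fun i _ => haneg i
    have hNsq : ∑ i, a i ^ 2 ≤ N ^ 2 :=
      Finset.sum_sq_le_sq_sum_of_nonneg fun i _ => haneg i
    have hbsq : ∑ i, bb i ^ 2 ≤ (k:ℝ) * δ ^ 2 := by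
      calc ∑ i, bb i ^ 2 ≤ ∑ _i : Fin k, δ^2 := Finset.sum_le_sum fun i _ =>
            pow_le_pow_left₀ (le_max_right _ _) (hbδ i) 2
        _ = (k:ℝ) * δ^2 := by simp [mul_comm]
    have hsplit : ∑ i, dg i ^ 2 = (∑ i, a i ^ 2) + ∑ i, bb i ^ 2 := by
      rw [← Finset.sum_add_distrib]; exact Finset.sum_congr rfl fun i _ => hsqab i
    have hN2 : 1/(4*(k:ℝ)) - (k:ℝ)*δ^2 ≤ N^2 := by
      have := hsq'
      rw [hsplit] at this
      linarith
    have hsumb : ∑ i, bb i ≤ (k:ℝ) * δ := by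
      calc ∑ i, bb i ≤ ∑ _i : Fin k, δ := Finset.sum_le_sum fun i _ => hbδ i
        _ = (k:ℝ) * δ := by simp [mul_comm]
    have hsumdg : ∑ i, dg i ≤ (k:ℝ)*δ - N := by
      have : ∑ i, dg i = (∑ i, bb i) - N := by
        rw [hN, ← Finset.sum_sub_distrib]; exact Finset.sum_congr rfl fun i _ => hab i
      linarith
    clear_value a bb N
    -- key numeric step: N ≥ kδ + 1/(4k)
    have hδK2 : (k:ℝ)^2 * δ ≤ 1/50 := by
      have h50 : (0:ℝ) < 50*(k:ℝ)^2 := by positivity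
      rw [le_div_iff₀ h50] at hδk
      linarith
    have hu0 : (0:ℝ) ≤ (k:ℝ)^2*δ := by positivity
    have hpoly : 16*(k:ℝ)^4*δ^2 + 16*(k:ℝ)^3*δ^2 + 8*(k:ℝ)^2*δ + 1 ≤ 4*(k:ℝ) := by
      nlinarith [mul_le_mul_of_nonneg_left hδK2 hu0, hδK2, hk1, hu0,
        mul_le_mul_of_nonneg_left hδK2 hδ.le, sq_nonneg ((k:ℝ)^2*δ),
        mul_nonneg (mul_nonneg hu0 hu0) (by linarith : (0:ℝ) ≤ (k:ℝ) - 1),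
        mul_le_mul_of_nonneg_left hδK2 (mul_nonneg hu0 hu0)]
    have hT2 : ((k:ℝ)*δ + 1/(4*(k:ℝ)))^2 ≤ 1/(4*(k:ℝ)) - (k:ℝ)*δ^2 := by
      have hiden : 1/(4*(k:ℝ)) - (k:ℝ)*δ^2 - ((k:ℝ)*δ + 1/(4*(k:ℝ)))^2
          = (4*(k:ℝ) - (16*(k:ℝ)^4*δ^2 + 16*(k:ℝ)^3*δ^2 + 8*(k:ℝ)^2*δ + 1))/(16*(k:ℝ)^2) := by
        field_simp
        ring
      have hnn : (0:ℝ) ≤ (4*(k:ℝ) - (16*(k:ℝ)^4*δ^2 + 16*(k:ℝ)^3*δ^2 + 8*(k:ℝ)^2*δ + 1))/(16*(k:ℝ)^2) :=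
        div_nonneg (by linarith) (by positivity)
      linarith [hiden, hnn]
    have hkey : (k:ℝ)*δ + 1/(4*(k:ℝ)) ≤ N := by
      have hT0 : (0:ℝ) < (k:ℝ)*δ + 1/(4*(k:ℝ)) := by positivity
      have hTN : ((k:ℝ)*δ + 1/(4*(k:ℝ)))^2 ≤ N^2 := by linarith
      nlinarith [hTN, hT0, hN0]
    have hfinal : ∑ i, dg i ≤ -(1/(4*(k:ℝ))) := by linarith
    have : (1/(k:ℝ)) * ∑ i, dg i ≤ (1/(k:ℝ)) * (-(1/(4*(k:ℝ)))) :=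
      mul_le_mul_of_nonneg_left hfinal (by positivity)
    calc (1/(k:ℝ)) * ∑ i, dg i ≤ (1/(k:ℝ)) * (-(1/(4*(k:ℝ)))) := this
      _ = -(1/(4*(k:ℝ)^2)) := by field_simp
end
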